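/- arXiv:1802.02642 — 6 statements merged into one kernel-verified Lean document; each statement's English description precedes it below -/
import Mathlib

section
/- Let H be a simple finite-dimensional real Lie algebra of compact type. Then H has no solvable Lie subalgebra of codimension 1; that is, every Lie subalgebra B ≤ H with dim B = dim H − 1 fails to be solvable. -/
/-!
Let `B` be a subalgebra of codimension one and `x` a nonzero vector spanning its Killing-orthogonal
line. Invariance of the Killing form makes this line stable under `ad B`, so `⁅b, x⁆ = c • x`;
pairing with `x` gives `c κ(x, x) = κ(b, ⁅x, x⁆) = 0`, whence `⁅b, x⁆ = 0`. Since the Killing form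
is definite, `H = B ⊕ ℝ x`, so `x` is central, `ad x = 0` and `κ(x, x) = 0`, a contradiction.
-/

open Module

namespace LinearMap.BilinForm

variable {K V : Type*} [Field K] [AddCommGroup V] [Module K V] [FiniteDimensional K V]

theorem isCompl_orthogonal_of_anisotropic {B : LinearMap.BilinForm K V} (hB₀ : B.IsRefl)
    (hB : ∀ x, B x x = 0 → x = 0) (W : Submodule K V) : IsCompl W (B.orthogonal W) :=
  (isCompl_orthogonal_iff_disjoint hB₀).mpr <|
    Submodule.disjoint_def.mpr fun x hxW hx => hB x (hx x hxW)

end LinearMap.BilinForm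

namespace LieAlgebra

section CommRing

variable {R L : Type*} [CommRing R] [LieRing L] [LieAlgebra R L]

theorem killingForm_lie_apply_self (y x : L) : killingForm R L ⁅y, x⁆ x = 0 := by
  rw [LieModule.traceForm_apply_lie_apply, lie_self, map_zero]

theorem lie_mem_orthogonal_killingForm {B : LieSubalgebra R L} {b y : L} (hb : b ∈ B)
    (hy : y ∈ (killingForm R L).orthogonal B.toSubmodule) :
    ⁅b, y⁆ ∈ (killingForm R L).orthogonal B.toSubmodule := fun b' hb' => by
  rw [← LieModule.traceForm_apply_lie_apply]
  exact hy _ (B.lie_mem hb' hb)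

theorem lie_eq_zero_of_lie_eq_smul [NoZeroDivisors R] {x y : L} {c : R}
    (hx : killingForm R L x x ≠ 0) (h : ⁅y, x⁆ = c • x) : ⁅y, x⁆ = 0 := by
  have hc : c * killingForm R L x x = 0 := by
    rw [← smul_eq_mul, ← LinearMap.smul_apply, ← map_smul, ← h, killingForm_lie_apply_self]
  rw [h, (mul_eq_zero.mp hc).resolve_right hx, zero_smul]

theorem eq_zero_of_ad_eq_zero (hκ : ∀ x : L, killingForm R L x x = 0 → x = 0) {x : L}
    (hx : ad R L x = 0) : x = 0 :=
  hκ x <| by rw [killingForm_apply_apply, hx, LinearMap.zero_comp, map_zero]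

end CommRing

variable {K L : Type*} [Field K] [LieRing L] [LieAlgebra K L] [FiniteDimensional K L]

theorem _root_.LieSubalgebra.finrank_add_one_ne_of_killingForm_anisotropic
    (hκ : ∀ x : L, killingForm K L x x = 0 → x = 0) (B : LieSubalgebra K L) :
    finrank K B + 1 ≠ finrank K L := by
  intro hB
  set W := (killingForm K L).orthogonal B.toSubmodule
  have hcompl : IsCompl B.toSubmodule W :=
    LinearMap.BilinForm.isCompl_orthogonal_of_anisotropic
      (LieModule.traceForm_isSymm K L L).isRefl hκ _
  have hline : finrank K W = 1 := by
    have := Submodule.finrank_add_eq_of_isCompl hcompl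
    change finrank K B + _ = _ at this
    omega
  obtain ⟨⟨x, hxW⟩, hx_ne, hspan⟩ := finrank_eq_one_iff'.mp hline
  have hx0 : x ≠ 0 := by simpa using hx_ne
  have hmul : ∀ y ∈ W, ∃ c : K, y = c • x := fun y hy => by
    obtain ⟨c, hc⟩ := hspan ⟨y, hy⟩
    exact ⟨c, (congrArg Subtype.val hc).symm⟩
  have hxx : killingForm K L x x ≠ 0 := mt (hκ x) hx0
  have had : ad K L x = 0 := by
    rw [← LinearMap.ker_eq_top, eq_top_iff, ← hcompl.sup_eq_top, sup_le_iff]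
    constructor
    · intro b hb
      obtain ⟨c, hc⟩ := hmul _ (lie_mem_orthogonal_killingForm hb hxW)
      rw [LinearMap.mem_ker, ad_apply, ← lie_skew, lie_eq_zero_of_lie_eq_smul hxx hc, neg_zero]
    · intro y hy
      obtain ⟨c, rfl⟩ := hmul y hy
      rw [LinearMap.mem_ker, ad_apply, lie_smul, lie_self, smul_zero]
  exact hx0 (eq_zero_of_ad_eq_zero hκ had)

end LieAlgebra

/-- A simple finite-dimensional real Lie algebra of compact type (negative definite Killing
form) has no solvable Lie subalgebra of codimension 1. -/
theorem stmt3 (H : Type*) [LieRing H] [LieAlgebra ℝ H] [FiniteDimensional ℝ H]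
    (hsimple : LieAlgebra.IsSimple ℝ H)
    (hcompact : ∀ x : H, x ≠ 0 → killingForm ℝ H x x < 0)
    (B : LieSubalgebra ℝ H)
    (hdim : Module.finrank ℝ B = Module.finrank ℝ H - 1) :
    ¬ LieAlgebra.IsSolvable B := by
  have : Nontrivial H := hsimple.nontrivial
  have hpos : 0 < Module.finrank ℝ H := Module.finrank_pos
  have hκ : ∀ x : H, killingForm ℝ H x x = 0 → x = 0 := fun x hx =>
    by_contra fun h => (hcompact x h).ne hx
  exact absurd (by omega) (B.finrank_add_one_ne_of_killingForm_anisotropic hκ)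
end

section
/- Let G ≤ Iso(ℝⁿ) act transitively on ℝⁿ and let h ∈ Iso(ℝⁿ) satisfy h ∘ g = g ∘ h for every g ∈ G. Then h is a translation: there exists v ∈ ℝⁿ with h(x) = x + v for all x ∈ ℝⁿ. -/
/-- If a subgroup `G` of the isometry group of `ℝⁿ` acts transitively and an isometry `h`
commutes with every element of `G`, then `h` is a translation. -/
theorem stmt6 (n : ℕ) (hn : 1 ≤ n)
    (G : Subgroup (EuclideanSpace ℝ (Fin n) ≃ᵢ EuclideanSpace ℝ (Fin n)))
    (htrans : ∀ x y : EuclideanSpace ℝ (Fin n), ∃ g ∈ G, g x = y)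
    (h : EuclideanSpace ℝ (Fin n) ≃ᵢ EuclideanSpace ℝ (Fin n))
    (hcomm : ∀ g ∈ G, h * g = g * h) :
    ∃ v : EuclideanSpace ℝ (Fin n), ∀ x : EuclideanSpace ℝ (Fin n), h x = x + v := by
  -- key: the displacement distance is constant
  have key : ∀ x : EuclideanSpace ℝ (Fin n), dist (h x) x = dist (h 0) 0 := by
    intro x
    obtain ⟨g, hgG, hg0⟩ := htrans 0 x
    have hcg : h (g 0) = g (h 0) := by
      have := hcomm g hgG
      have : (h * g) 0 = (g * h) 0 := by rw [this]
      simpa using this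
    calc dist (h x) x = dist (g (h 0)) (g 0) := by rw [← hg0, hcg]
      _ = dist (h 0) 0 := g.isometry.dist_eq _ _
  set L := h.toRealLinearIsometryEquiv with hL
  have hLapp : ∀ x, (L : EuclideanSpace ℝ (Fin n) → EuclideanSpace ℝ (Fin n)) x
      = h x - h 0 := fun x => h.toRealLinearIsometryEquiv_apply x
  -- show L x = x for all x
  have hfix : ∀ x : EuclideanSpace ℝ (Fin n), L x = x := by
    intro x
    by_contra hne
    have hpos : 0 < ‖L x - x‖ := by
      rwa [norm_pos_iff, sub_ne_zero]
    have hb : ∀ t : ℝ, ‖t • (L x - x)‖ ≤ 2 * ‖h 0‖ := by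
      intro t
      have h1 : ‖h (t • x) - t • x‖ = ‖h 0‖ := by
        have := key (t • x)
        simpa [dist_eq_norm] using this
      have h2 : h (t • x) - t • x = t • (L x - x) + h 0 := by
        have : L (t • x) = h (t • x) - h 0 := hLapp _
        have hsmul : L (t • x) = t • L x := L.map_smul t x
        rw [hsmul] at this
        rw [smul_sub]
        rw [this]
        abel
      have h3 : ‖t • (L x - x)‖ ≤ ‖t • (L x - x) + h 0‖ + ‖h 0‖ := by
        have h4 : t • (L x - x) = (t • (L x - x) + h 0) - h 0 := by abel
        nth_rewrite 1 [h4]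
        exact norm_sub_le (t • (L x - x) + h 0) (h 0)
      rw [← h2, h1] at h3
      linarith
    have := hb ((2 * ‖h 0‖ + 1) / ‖L x - x‖)
    rw [norm_smul, Real.norm_eq_abs, abs_of_pos (by positivity),
      div_mul_cancel₀ _ (ne_of_gt hpos)] at this
    linarith
  refine ⟨h 0, fun x => ?_⟩
  have hx := hLapp x
  rw [hfix x] at hx
  exact (eq_sub_iff_add_eq.mp hx).symm
end

section
/- Let G ≤ Iso(ℝⁿ) act transitively on ℝⁿ, and let G' be a normal subgroup of G such that for every x ∈ ℝⁿ the G'-orbit of x is an affine subspace of ℝⁿ. Then all G'-orbits are pairwise parallel: there is a single linear subspace V ⊆ ℝⁿ such that the G'-orbit of x equals x + V for every x ∈ ℝⁿ. -/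
/-!
Let `x + V` and `z + W` be the orbits of `x` and `z`. Each `k` in the group moves `z` and `x`
to points at distance `dist z x`, so the affine subspace `z + W` lies within bounded distance
of `x + V`. Projecting onto `Vᗮ`, every line `z + ℝ w` with `w ∈ W` then has bounded image,
which forces `w ∈ V`. By symmetry `V = W`.
-/

open scoped Pointwise

theorem image_add_submodule_eq_of_mem {R M : Type*} [Ring R] [AddCommGroup M] [Module R M]
    {V : Submodule R M} {p x : M} (hx : x ∈ (p + ·) '' (V : Set M)) :
    (p + ·) '' (V : Set M) = (x + ·) '' (V : Set M) := by
  obtain ⟨v, hv, rfl⟩ := hx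
  change (p +ᵥ ·) '' (V : Set M) = ((p + v) +ᵥ ·) '' (V : Set M)
  rw [Set.image_vadd, Set.image_vadd, ← vadd_vadd, vadd_coe_set hv]

theorem eq_zero_of_forall_norm_add_smul_le {E : Type*} [NormedAddCommGroup E]
    [NormedSpace ℝ E] {u v : E} {C : ℝ} (h : ∀ t : ℝ, ‖u + t • v‖ ≤ C) : v = 0 := by
  have hline (t : ℝ) : |t| * ‖v‖ ≤ C + ‖u‖ :=
    calc |t| * ‖v‖ = ‖(u + t • v) - u‖ := by
          rw [add_sub_cancel_left, norm_smul, Real.norm_eq_abs]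
      _ ≤ C + ‖u‖ := (norm_sub_le _ _).trans (by gcongr; exact h t)
  by_contra hv
  have hpos : 0 < ‖v‖ := norm_pos_iff.mpr hv
  have := hline ((|C| + ‖u‖ + 1) / ‖v‖)
  rw [abs_of_pos (by positivity), div_mul_cancel₀ _ hpos.ne'] at this
  linarith [le_abs_self C]

variable {E : Type*} [NormedAddCommGroup E] [InnerProductSpace ℝ E]

theorem Submodule.le_of_forall_exists_dist_add_le {V W : Submodule ℝ E}
    [V.HasOrthogonalProjection] {x z : E} {C : ℝ}
    (h : ∀ w ∈ W, ∃ v ∈ V, dist (z + w) (x + v) ≤ C) : W ≤ V := by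
  intro w hw
  set P := Vᗮ.starProjection
  have hbounded (t : ℝ) : ‖P (z - x) + t • P w‖ ≤ C := by
    obtain ⟨v, hv, hdist⟩ := h (t • w) (W.smul_mem t hw)
    have hPv : P v = 0 := starProjection_orthogonal_apply_eq_zero hv
    calc ‖P (z - x) + t • P w‖ = ‖P (z + t • w - (x + v))‖ := by
          rw [show z + t • w - (x + v) = (z - x) + t • w - v by abel]
          simp only [map_sub, map_add, map_smul, hPv, sub_zero]
      _ ≤ ‖z + t • w - (x + v)‖ := Vᗮ.norm_starProjection_apply_le _
      _ ≤ C := by rwa [← dist_eq_norm]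
  have hPw : P w = 0 := eq_zero_of_forall_norm_add_smul_le hbounded
  rwa [starProjection_apply_eq_zero_iff, orthogonal_orthogonal] at hPw

theorem le_of_isometry_orbits_eq_image_add (H : Subgroup (E ≃ᵢ E)) {V W : Submodule ℝ E}
    [V.HasOrthogonalProjection] {x z : E}
    (hx : {y | ∃ k ∈ H, k x = y} = (x + ·) '' (V : Set E))
    (hz : {y | ∃ k ∈ H, k z = y} = (z + ·) '' (W : Set E)) : W ≤ V := by
  refine Submodule.le_of_forall_exists_dist_add_le (x := x) (z := z) (C := dist z x) ?_
  intro w hw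
  obtain ⟨k, hk, hkz⟩ : z + w ∈ {y | ∃ k ∈ H, k z = y} := hz ▸ ⟨w, hw, rfl⟩
  obtain ⟨v, hv, hvx⟩ : k x ∈ (x + ·) '' (V : Set E) := hx ▸ ⟨k, hk, rfl⟩
  exact ⟨v, hv, by rw [← hkz, show x + v = k x from hvx, k.dist_eq]⟩

theorem stmt7_general (n : ℕ)
    (G' : Subgroup (EuclideanSpace ℝ (Fin n) ≃ᵢ EuclideanSpace ℝ (Fin n)))
    (haff : ∀ x : EuclideanSpace ℝ (Fin n),
      ∃ (p : EuclideanSpace ℝ (Fin n)) (V : Submodule ℝ (EuclideanSpace ℝ (Fin n))),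
        {y | ∃ k ∈ G', k x = y} = (fun v => p + v) '' (V : Set (EuclideanSpace ℝ (Fin n)))) :
    ∃ V : Submodule ℝ (EuclideanSpace ℝ (Fin n)),
      ∀ x : EuclideanSpace ℝ (Fin n),
        {y | ∃ k ∈ G', k x = y} = (fun v => x + v) '' (V : Set (EuclideanSpace ℝ (Fin n))) := by
  have horbit (x : EuclideanSpace ℝ (Fin n)) : ∃ V : Submodule ℝ (EuclideanSpace ℝ (Fin n)),
      {y | ∃ k ∈ G', k x = y} = (x + ·) '' (V : Set (EuclideanSpace ℝ (Fin n))) := by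
    obtain ⟨p, V, hpV⟩ := haff x
    have hx : x ∈ {y | ∃ k ∈ G', k x = y} := ⟨1, G'.one_mem, rfl⟩
    exact ⟨V, hpV.trans (image_add_submodule_eq_of_mem (hpV ▸ hx))⟩
  choose V hV using horbit
  refine ⟨V 0, fun x => ?_⟩
  have hdir : V x = V 0 := le_antisymm
    (le_of_isometry_orbits_eq_image_add G' (hV 0) (hV x))
    (le_of_isometry_orbits_eq_image_add G' (hV x) (hV 0))
  rw [hV x, hdir]

/-- If `G` is a transitive subgroup of the isometry group of `ℝⁿ` and `G'` is a normal
subgroup of `G` all of whose orbits are affine subspaces, then all `G'`-orbits are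
pairwise parallel affine subspaces: there is a single linear subspace `V` such that the
orbit of every `x` equals `x + V`. -/
theorem stmt7 (n : ℕ) (hn : 1 ≤ n)
    (G G' : Subgroup (EuclideanSpace ℝ (Fin n) ≃ᵢ EuclideanSpace ℝ (Fin n)))
    (htrans : ∀ x y : EuclideanSpace ℝ (Fin n), ∃ g ∈ G, g x = y)
    (hle : G' ≤ G)
    (hnormal : ∀ g ∈ G, ∀ k ∈ G', g * k * g⁻¹ ∈ G')
    (haff : ∀ x : EuclideanSpace ℝ (Fin n),
      ∃ (p : EuclideanSpace ℝ (Fin n)) (V : Submodule ℝ (EuclideanSpace ℝ (Fin n))),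
        {y | ∃ k ∈ G', k x = y} = (fun v => p + v) '' (V : Set (EuclideanSpace ℝ (Fin n)))) :
    ∃ V : Submodule ℝ (EuclideanSpace ℝ (Fin n)),
      ∀ x : EuclideanSpace ℝ (Fin n),
        {y | ∃ k ∈ G', k x = y} = (fun v => x + v) '' (V : Set (EuclideanSpace ℝ (Fin n))) :=
  stmt7_general n G' haff
end

section
/- Every linear subspace U ⊆ ℝᵈ that is M-invariant (M·U ⊆ U) and contained in W is the zero subspace. -/
open Finset

/-- hockey stick identity -/
private lemma hockey_stick (k : ℕ) : ∀ n : ℕ,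
    ∑ j ∈ range n, Nat.choose j k = Nat.choose n (k + 1) := by
  intro n
  induction n with
  | zero => simp
  | succ n ih => rw [sum_range_succ, ih, Nat.choose_succ_succ']; omega

/-- Let `M` be the `d×d` skew-symmetric matrix with `M i j = 1` for `i < j` (`d > 2`), and
let `W = {x : x₀ = 0}`. Every `M`-invariant linear subspace contained in `W` is zero. -/
theorem stmt8 (d : ℕ) (hd : 2 < d)
    (M : Matrix (Fin d) (Fin d) ℝ)
    (hM : ∀ i j : Fin d, M i j = if i < j then 1 else if j < i then -1 else 0)
    (U : Submodule ℝ (Fin d → ℝ))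
    (hinv : ∀ x ∈ U, M.mulVec x ∈ U)
    (hW : ∀ x ∈ U, x ⟨0, by omega⟩ = 0) :
    U = ⊥ := by
  set i0 : Fin d := ⟨0, by omega⟩ with hi0
  -- every element of U has total sum zero
  have hsum : ∀ v ∈ U, ∑ j : Fin d, v j = 0 := by
    intro v hv
    have h0 : (M.mulVec v) i0 = 0 := hW _ (hinv v hv)
    have hexp : (M.mulVec v) i0 = ∑ l : Fin d, M i0 l * v l := rfl
    have hterm : ∀ l : Fin d, l ≠ i0 → M i0 l * v l = v l := by
      intro l hl
      have hlt : i0 < l := by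
        have h1 : (l : ℕ) ≠ 0 := fun h => hl (Fin.ext h)
        have h2 : (i0 : ℕ) = 0 := rfl
        exact Fin.lt_def.mpr (by omega)
      rw [hM]
      simp [hlt]
    have hvi0 : v i0 = 0 := hW v hv
    calc ∑ j : Fin d, v j
        = v i0 + ∑ j ∈ univ.erase i0, v j := (Finset.add_sum_erase univ v (mem_univ i0)).symm
      _ = M i0 i0 * v i0 + ∑ j ∈ univ.erase i0, M i0 j * v j := by
          rw [hvi0]
          rw [hM]
          simp only [lt_self_iff_false, if_false, zero_mul]
          congr 1
          exact Finset.sum_congr rfl fun j hj => (hterm j (Finset.mem_erase.1 hj).1).symm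
      _ = ∑ j : Fin d, M i0 j * v j :=
          Finset.add_sum_erase univ (fun j => M i0 j * v j) (mem_univ i0)
      _ = 0 := by rw [← hexp, h0]
  -- binomial moments vanish
  have hmom : ∀ k : ℕ, ∀ v ∈ U, ∑ j : Fin d, ((j : ℕ).choose k : ℝ) * v j = 0 := by
    intro k
    induction k with
    | zero => intro v hv; simpa using hsum v hv
    | succ k ih =>
      intro v hv
      have hw := ih (M.mulVec v) (hinv v hv)
      have hswap : ∑ j : Fin d, ((j : ℕ).choose k : ℝ) * (M.mulVec v) j
          = ∑ l : Fin d, (∑ j : Fin d, ((j : ℕ).choose k : ℝ) * M j l) * v l := by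
        simp only [Matrix.mulVec, dotProduct, Finset.mul_sum, Finset.sum_mul, mul_assoc]
        exact Finset.sum_comm
      have hg : ∀ l : Fin d, ∑ j : Fin d, ((j : ℕ).choose k : ℝ) * M j l
          = 2 * ((l : ℕ).choose (k + 1) : ℝ) + ((l : ℕ).choose k : ℝ)
            - (d.choose (k + 1) : ℝ) := by
        intro l
        have hcast : ∀ j : Fin d, ((j : ℕ).choose k : ℝ) * M j l
            = ((j : ℕ).choose k : ℝ) *
              (if (j : ℕ) < (l : ℕ) then 1 else if (l : ℕ) < (j : ℕ) then -1 else 0) := by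
          intro j
          rw [hM]
          simp only [Fin.lt_def]
        rw [Finset.sum_congr rfl fun j _ => hcast j]
        rw [Fin.sum_univ_eq_sum_range
          (fun j => ((j.choose k : ℝ)) *
            (if j < (l : ℕ) then 1 else if (l : ℕ) < j then -1 else 0)) d]
        have hld : (l : ℕ) + 1 ≤ d := l.isLt
        rw [← Finset.sum_range_add_sum_Ico _ hld]
        have h1 : ∑ j ∈ range ((l : ℕ) + 1),
            ((j.choose k : ℝ)) * (if j < (l : ℕ) then 1 else if (l : ℕ) < j then -1 else 0)
            = ((l : ℕ).choose (k + 1) : ℝ) := by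
          rw [Finset.sum_range_succ]
          simp only [lt_self_iff_false, if_false, mul_zero, add_zero]
          have : ∀ j ∈ range (l : ℕ),
              ((j.choose k : ℝ)) * (if j < (l : ℕ) then 1 else if (l : ℕ) < j then -1 else 0)
              = (j.choose k : ℝ) := by
            intro j hj
            rw [if_pos (Finset.mem_range.1 hj)]
            ring
          rw [Finset.sum_congr rfl this, ← Nat.cast_sum, hockey_stick]
        have h2 : ∑ j ∈ Ico ((l : ℕ) + 1) d,
            ((j.choose k : ℝ)) * (if j < (l : ℕ) then 1 else if (l : ℕ) < j then -1 else 0)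
            = -((d.choose (k + 1) : ℝ) - (((l : ℕ) + 1).choose (k + 1) : ℝ)) := by
          have : ∀ j ∈ Ico ((l : ℕ) + 1) d,
              ((j.choose k : ℝ)) * (if j < (l : ℕ) then 1 else if (l : ℕ) < j then -1 else 0)
              = -(j.choose k : ℝ) := by
            intro j hj
            have hjl : (l : ℕ) < j := by
              have := (Finset.mem_Ico.1 hj).1; omega
            rw [if_neg (by omega), if_pos hjl]
            ring
          have e1 : ∑ j ∈ range d, ((j.choose k : ℕ) : ℝ) = (d.choose (k + 1) : ℝ) := by
            rw [← Nat.cast_sum, hockey_stick]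
          have e2 : ∑ j ∈ range ((l : ℕ) + 1), ((j.choose k : ℕ) : ℝ)
              = (((l : ℕ) + 1).choose (k + 1) : ℝ) := by
            rw [← Nat.cast_sum, hockey_stick]
          rw [Finset.sum_congr rfl this, Finset.sum_neg_distrib,
            Finset.sum_Ico_eq_sub _ hld, e1, e2]
        rw [h1, h2, Nat.choose_succ_succ']
        push_cast
        ring
      rw [hswap, Finset.sum_congr rfl fun l _ => by rw [hg l]] at hw
      have hexpand : ∑ l : Fin d,
          (2 * ((l : ℕ).choose (k + 1) : ℝ) + ((l : ℕ).choose k : ℝ)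
            - (d.choose (k + 1) : ℝ)) * v l
          = 2 * (∑ l : Fin d, ((l : ℕ).choose (k + 1) : ℝ) * v l)
            + (∑ l : Fin d, ((l : ℕ).choose k : ℝ) * v l)
            - (d.choose (k + 1) : ℝ) * (∑ l : Fin d, v l) := by
        rw [Finset.mul_sum, Finset.mul_sum, ← Finset.sum_add_distrib, ← Finset.sum_sub_distrib]
        apply Finset.sum_congr rfl
        intro l _
        ring
      rw [hexpand, ih v hv, hsum v hv] at hw
      linarith
  -- conclude U = ⊥
  rw [Submodule.eq_bot_iff]
  intro x hx
  have key : ∀ n : ℕ, ∀ i : Fin d, d - 1 - (i : ℕ) < n → x i = 0 := by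
    intro n
    induction n with
    | zero => intro i hi; omega
    | succ n ih =>
      intro i hi
      have hm := hmom (i : ℕ) x hx
      have hsingle : ∑ j : Fin d, ((j : ℕ).choose (i : ℕ) : ℝ) * x j = x i := by
        rw [Finset.sum_eq_single i]
        · simp
        · intro j _ hj
          rcases lt_or_gt_of_ne (fun h : (j : ℕ) = (i : ℕ) => hj (Fin.ext h)) with h | h
          · rw [Nat.choose_eq_zero_of_lt h]; simp
          · have hx0 : x j = 0 := by
              apply ih
              have := j.isLt
              have := i.isLt
              omega
            rw [hx0, mul_zero]
        · intro h; exact absurd (mem_univ i) h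
      rw [hsingle] at hm
      exact hm
  funext i
  exact key d i (by have := i.isLt; omega)
end

section
/- The linear endomorphism ad(𝐀) : 𝔤 → 𝔤, X ↦ ⁅𝐀, X⁆, has trace equal to a; in particular its trace is nonzero, so the Lie algebra 𝔤 is not unimodular. -/
/-!
Inside `𝔤𝔩(n + 1)`, `𝐀 = fromBlocks A 0 0 0` acts on the translations by `⁅𝐀, E_j⁆ = ∑ᵢ A i j • E_i`
and kills itself, so in the basis `E₁, …, E_d, 𝐀` of `𝔤` the matrix of `ad 𝐀` is `𝐀` again.
Hence `tr (ad 𝐀) = tr A = a • tr M + a = a`, the skew-symmetric `M` having zero diagonal.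
-/

open Matrix

namespace Matrix

variable {R : Type*} [CommRing R] {n : Type*} [Fintype n]

def affineLinear (A : Matrix n n R) : Matrix (n ⊕ Unit) (n ⊕ Unit) R := fromBlocks A 0 0 0

def affineTranslation (v : n → R) : Matrix (n ⊕ Unit) (n ⊕ Unit) R :=
  fromBlocks 0 (replicateCol Unit v) 0 0

theorem trace_affineLinear (A : Matrix n n R) : trace (affineLinear A) = trace A := by
  simp [affineLinear, trace, Fintype.sum_sum_type]

theorem lie_affineLinear_affineTranslation (A : Matrix n n R) (v : n → R) :
    ⁅affineLinear A, affineTranslation v⁆ = affineTranslation (A *ᵥ v) := by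
  simp [affineLinear, affineTranslation, Ring.lie_def, fromBlocks_multiply, replicateCol_mulVec]

variable [DecidableEq n]

def affineGenerators (A : Matrix n n R) : n ⊕ Unit → Matrix (n ⊕ Unit) (n ⊕ Unit) R :=
  Sum.elim (fun i => affineTranslation (Pi.single i 1)) (fun _ => affineLinear A)

theorem sum_smul_affineGenerators (A : Matrix n n R) (c : n ⊕ Unit → R) :
    ∑ i, c i • affineGenerators A i =
      fromBlocks (c (.inr ()) • A) (replicateCol Unit (fun i => c (.inl i))) 0 0 := by
  ext (i | i) (j | j) <;>
    simp [affineGenerators, affineLinear, affineTranslation, Fintype.sum_sum_type,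
      Matrix.sum_apply, Pi.single_apply]

theorem lie_affineGenerators (A : Matrix n n R) (j : n ⊕ Unit) :
    ⁅affineLinear A, affineGenerators A j⁆ = ∑ i, affineLinear A i j • affineGenerators A i := by
  rw [sum_smul_affineGenerators]
  rcases j with j | ⟨⟩
  · rw [affineGenerators, Sum.elim_inl, lie_affineLinear_affineTranslation, mulVec_single_one]
    simp [affineLinear, affineTranslation]
    rfl
  · rw [affineGenerators, Sum.elim_inr, Ring.lie_def, sub_self]
    simp [affineLinear, ← Pi.zero_def]

variable {K : Type*} [Field K]

theorem linearIndependent_affineGenerators {A : Matrix n n K} (hA : A ≠ 0) :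
    LinearIndependent K (affineGenerators A) := by
  rw [Fintype.linearIndependent_iff]
  intro c hc
  rw [sum_smul_affineGenerators, ← fromBlocks_zero, fromBlocks_inj] at hc
  obtain ⟨hlin, htrans, -, -⟩ := hc
  have h0 : c (.inr ()) = 0 := (smul_eq_zero.mp hlin).resolve_right hA
  rintro (i | ⟨⟩)
  · exact congrFun (replicateCol_injective htrans) i
  · exact h0

theorem trace_lie_affineLinear {A : Matrix n n K} (hA : A ≠ 0)
    {𝔤 : Submodule K (Matrix (n ⊕ Unit) (n ⊕ Unit) K)}
    (h𝔤 : Submodule.span K (Set.range (affineGenerators A)) = 𝔤) (f : 𝔤 →ₗ[K] 𝔤)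
    (hf : ∀ X : 𝔤, (f X : Matrix (n ⊕ Unit) (n ⊕ Unit) K) = ⁅affineLinear A, (X : Matrix _ _ K)⁆) :
    LinearMap.trace K 𝔤 f = trace A := by
  let b : Module.Basis (n ⊕ Unit) K 𝔤 :=
    (Module.Basis.span (linearIndependent_affineGenerators hA)).map (LinearEquiv.ofEq _ _ h𝔤)
  have hb (i : n ⊕ Unit) : (b i : Matrix _ _ K) = affineGenerators A i := by
    simp [b, Module.Basis.span_apply]
  have hf_eq : f = toLin b b (affineLinear A) := b.ext fun j => Subtype.ext <| by
    rw [hf, hb, toLin_self, lie_affineGenerators]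
    simp [hb]
  rw [LinearMap.trace_eq_matrix_trace K b, hf_eq, LinearMap.toMatrix_toLin, trace_affineLinear]

end Matrix

/-- The endomorphism `ad(𝐀) : 𝔤 → 𝔤`, `X ↦ ⁅𝐀, X⁆`, of the Lie algebra `𝔤` spanned by
`E₁, …, E_d, 𝐀` has trace `a ≠ 0`; hence `𝔤` is not unimodular. -/
theorem stmt12 (d : ℕ) (hd : 3 ≤ d) (a : ℝ) (ha : a ≠ 0)
    (M' : Matrix (Fin (d - 1)) (Fin (d - 1)) ℝ)
    (hM' : ∀ i j : Fin (d - 1), M' i j = if i < j then 1 else if j < i then -1 else 0)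
    (A : Matrix (Fin (d - 1) ⊕ Unit) (Fin (d - 1) ⊕ Unit) ℝ)
    (hA : A = fromBlocks (a • M')
      (a • Matrix.replicateCol Unit (Pi.single (⟨0, by omega⟩ : Fin (d - 1)) 1))
      (-(a • Matrix.replicateRow Unit (Pi.single (⟨0, by omega⟩ : Fin (d - 1)) 1)))
      (a • (1 : Matrix Unit Unit ℝ)))
    (E : (Fin (d - 1) ⊕ Unit) →
      Matrix ((Fin (d - 1) ⊕ Unit) ⊕ Unit) ((Fin (d - 1) ⊕ Unit) ⊕ Unit) ℝ)
    (hE : ∀ i, E i = fromBlocks 0 (Matrix.replicateCol Unit (Pi.single i 1)) 0 0)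
    (Abig : Matrix ((Fin (d - 1) ⊕ Unit) ⊕ Unit) ((Fin (d - 1) ⊕ Unit) ⊕ Unit) ℝ)
    (hAbig : Abig = fromBlocks A 0 0 0)
    (𝔤 : Submodule ℝ (Matrix ((Fin (d - 1) ⊕ Unit) ⊕ Unit) ((Fin (d - 1) ⊕ Unit) ⊕ Unit) ℝ))
    (h𝔤 : 𝔤 = Submodule.span ℝ (Set.range E ∪ {Abig}))
    (f : 𝔤 →ₗ[ℝ] 𝔤)
    (hf : ∀ X : 𝔤, (f X : Matrix ((Fin (d - 1) ⊕ Unit) ⊕ Unit) ((Fin (d - 1) ⊕ Unit) ⊕ Unit) ℝ)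
      = ⁅Abig, (X : Matrix ((Fin (d - 1) ⊕ Unit) ⊕ Unit) ((Fin (d - 1) ⊕ Unit) ⊕ Unit) ℝ)⁆) :
    LinearMap.trace ℝ 𝔤 f = a ∧ LinearMap.trace ℝ 𝔤 f ≠ 0 := by
  have hA0 : A ≠ 0 := fun h => ha <| by
    simpa [hA] using congrFun (congrFun h (.inr ())) (.inr ())
  have htrace : trace A = a := by
    simp [hA, trace, Fintype.sum_sum_type, hM']
  have hgen : Set.range (affineGenerators A) = Set.range E ∪ {Abig} := by
    rw [affineGenerators, Set.Sum.elim_range, Set.range_const, hAbig, affineLinear]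
    congr
    exact (funext hE).symm
  have htr : LinearMap.trace ℝ 𝔤 f = trace A :=
    trace_lie_affineLinear hA0 (hgen ▸ h𝔤.symm) f fun X => by rw [hf, hAbig, affineLinear]
  exact ⟨htr.trans htrace, htr ▸ htrace ▸ ha⟩
end

section
/- Let S be a skew-symmetric real n×n matrix. Then for every ε > 0 and every T > 0 there exists t ≥ T such that ‖exp(t·S) − I‖ < ε; in other words, there is a sequence t_k → +∞ with exp(t_k·S) converging to the identity matrix. -/
/-!
Since `S` is skew-symmetric, `exp (T • S)` is orthogonal. The orthogonal group is compact, and in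
a compact group `1` is a cluster point of the powers `g ^ k` of any element `g`; with
`g = exp (T • S)` this gives `k ≥ 1` such that `exp ((k * T) • S) = g ^ k` is `ε`-close to `1`.
-/

open Matrix
attribute [local instance] Matrix.frobeniusNormedAddCommGroup

open Filter Topology

namespace Matrix

variable {m 𝕜 : Type*} [Fintype m] [DecidableEq m] [RCLike 𝕜]

theorem isCompact_unitaryGroup : IsCompact (unitaryGroup m 𝕜 : Set (Matrix m m 𝕜)) := by
  have hbox : IsCompact (Set.univ.pi fun _ : m ↦ Set.univ.pi fun _ : m ↦
      Metric.closedBall (0 : 𝕜) 1) :=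
    isCompact_univ_pi fun _ ↦ isCompact_univ_pi fun _ ↦ isCompact_closedBall 0 1
  exact hbox.of_isClosed_subset (isClosed_unitary (R := Matrix m m 𝕜))
    fun U hU i _ j _ ↦ by simpa using entry_norm_bound_of_unitary hU i j

instance : CompactSpace (unitaryGroup m 𝕜) :=
  isCompact_iff_compactSpace.mp isCompact_unitaryGroup

theorem exp_mem_unitaryGroup {S : Matrix m m 𝕜} (hS : Sᴴ = -S) :
    NormedSpace.exp S ∈ unitaryGroup m 𝕜 := by
  rw [Unitary.mem_iff, star_eq_conjTranspose, ← exp_conjTranspose, hS,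
    ← exp_add_of_commute _ _ (Commute.refl S).neg_left,
    ← exp_add_of_commute _ _ (Commute.refl S).neg_right, neg_add_cancel, add_neg_cancel,
    NormedSpace.exp_zero, and_self]

end Matrix

/-- For a skew-symmetric real `n×n` matrix `S`, the one-parameter group `t ↦ exp (t S)`
returns arbitrarily close to the identity for arbitrarily large times: for every `ε > 0`
and `T > 0` there is `t ≥ T` with `‖exp (t S) − I‖ < ε`. -/
theorem stmt15 (n : ℕ) (S : Matrix (Fin n) (Fin n) ℝ) (hS : Sᵀ = -S)
    (ε : ℝ) (hε : 0 < ε) (T : ℝ) (hT : 0 < T) :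
    ∃ t : ℝ, T ≤ t ∧
      ‖NormedSpace.exp (t • S) - (1 : Matrix (Fin n) (Fin n) ℝ)‖ < ε := by
  have hTS : (T • S)ᴴ = -(T • S) := by
    rw [conjTranspose_eq_transpose_of_trivial, transpose_smul, hS, smul_neg]
  let g : unitaryGroup (Fin n) ℝ := ⟨NormedSpace.exp (T • S), exp_mem_unitaryGroup hTS⟩
  have hU : {Q : unitaryGroup (Fin n) ℝ | ‖(Q : Matrix (Fin n) (Fin n) ℝ) - 1‖ < ε} ∈ 𝓝 1 :=
    (isOpen_lt (by fun_prop) continuous_const).mem_nhds (by simpa using hε)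
  obtain ⟨k, hk, hgk⟩ := ((mapClusterPt_one_atTop_pow g).frequently hU).forall_exists_of_atTop 1
  have hpow : ((g ^ k : unitaryGroup (Fin n) ℝ) : Matrix (Fin n) (Fin n) ℝ) =
      NormedSpace.exp (((k : ℝ) * T) • S) := by
    rw [SubmonoidClass.coe_pow, mul_smul, Nat.cast_smul_eq_nsmul, exp_nsmul]
  refine ⟨k * T, le_mul_of_one_le_left hT.le (mod_cast hk), ?_⟩
  simpa [hpow] using hgk
end
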